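/- If h is a doubling dimension function with liminf_n N^n h(κ R_n) > 0, then ℋ^h(C_{s,𝒟}) > 0. -/

import Mathlib

/-!
Let `ν` be the uniform product measure on digit sequences `ℕ → Fin N` and `μ` its image under
the coding map `σ ↦ ∑ sᵢ • dᵢ(σᵢ)`, a probability measure carried by `C_{s,𝒟}`. If two
sequences first differ at index `m`, the digit gap `τ sₘ` dominates the tail `κ R_{m+1}`, so
their images are at distance at least `δ κ R_{m+1}` with `δ = (1 - M) / M`. Hence the preimage of
a set of diameter below `δ κ Rₙ` lies in a single cylinder of length `n`, so its `μ`-mass is at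
most `N⁻ⁿ`. Doubling makes `h (δ κ Rₙ)` comparable to `h (κ Rₙ) ≳ N⁻ⁿ`, so `μ t ≲ h (diam t)`
for all small sets `t`, and the mass distribution principle gives `ℋ^h (C_{s,𝒟}) > 0`.
-/

open MeasureTheory Filter Topology PiNat Metric
open scoped ENNReal

section Tails

variable {G : Type*} [AddCommGroup G] [TopologicalSpace G] [IsTopologicalAddGroup G]
  {f : ℕ → G}

theorem summable_nat_add_left (hf : Summable f) (k : ℕ) : Summable fun i => f (k + i) := by
  simpa only [add_comm k] using (summable_nat_add_iff k).2 hf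

theorem tsum_nat_add_left_eq_add [T2Space G] (hf : Summable f) (k : ℕ) :
    ∑' i, f (k + i) = f k + ∑' i, f (k + 1 + i) := by
  rw [(summable_nat_add_left hf k).tsum_eq_zero_add]
  simp only [add_zero, add_right_comm k, add_assoc]

variable {s : ℕ → ℝ}

theorem tsum_tail_pos (hs : ∀ n, 0 < s n) (hsum : Summable s) (n : ℕ) :
    0 < ∑' i, s (n + i) :=
  (summable_nat_add_left hsum n).tsum_pos (fun _ => (hs _).le) 0 (hs _)

theorem strictAnti_tsum_tail (hs : ∀ n, 0 < s n) (hsum : Summable s) :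
    StrictAnti fun n => ∑' i, s (n + i) :=
  strictAnti_nat_of_succ_lt fun n => by
    rw [tsum_nat_add_left_eq_add hsum n]
    exact lt_add_of_pos_left _ (hs n)

end Tails

section WeightedSeries

variable {E : Type*} [NormedAddCommGroup E] [NormedSpace ℝ E] {s : ℕ → ℝ} {v : ℕ → E} {κ : ℝ}

theorem norm_smul_le_mul_of_norm_le (hs : ∀ n, 0 ≤ s n) (hv : ∀ n, ‖v n‖ ≤ κ) (n : ℕ) :
    ‖s n • v n‖ ≤ s n * κ := by
  rw [norm_smul, Real.norm_of_nonneg (hs n)]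
  exact mul_le_mul_of_nonneg_left (hv n) (hs n)

theorem summable_smul_of_norm_le [CompleteSpace E] (hs : ∀ n, 0 ≤ s n) (hsum : Summable s)
    (hv : ∀ n, ‖v n‖ ≤ κ) : Summable fun n => s n • v n :=
  .of_norm_bounded (hsum.mul_right κ) (norm_smul_le_mul_of_norm_le hs hv)

theorem norm_tsum_smul_le (hs : ∀ n, 0 ≤ s n) (hsum : Summable s) (hv : ∀ n, ‖v n‖ ≤ κ) :
    ‖∑' n, s n • v n‖ ≤ κ * ∑' n, s n := by
  have hbound := norm_smul_le_mul_of_norm_le hs hv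
  have hnorm : Summable fun n => ‖s n • v n‖ :=
    .of_nonneg_of_le (fun n => norm_nonneg _) hbound (hsum.mul_right κ)
  calc ‖∑' n, s n • v n‖ ≤ ∑' n, ‖s n • v n‖ := norm_tsum_le_tsum_norm hnorm
    _ ≤ ∑' n, s n * κ := hnorm.tsum_le_tsum hbound (hsum.mul_right κ)
    _ = κ * ∑' n, s n := by rw [tsum_mul_right, mul_comm]

end WeightedSeries

section Doubling

variable {h : ℝ → ℝ} {c : ℝ}

theorem ofReal_le_pow_mul_of_doubling (hnn : ∀ x, 0 < x → 0 ≤ h x)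
    (hdbl : ∀ x > 0, h (2 * x) ≤ c * h x) (k : ℕ) {x : ℝ} (hx : 0 < x) :
    ENNReal.ofReal (h (2 ^ k * x)) ≤ ENNReal.ofReal c ^ k * ENNReal.ofReal (h x) := by
  induction k with
  | zero => simp
  | succ k ih =>
    calc ENNReal.ofReal (h (2 ^ (k + 1) * x)) ≤ ENNReal.ofReal (c * h (2 ^ k * x)) := by
          rw [pow_succ, mul_comm _ 2, mul_assoc]
          exact ENNReal.ofReal_le_ofReal (hdbl _ (by positivity))
      _ = ENNReal.ofReal c * ENNReal.ofReal (h (2 ^ k * x)) :=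
          ENNReal.ofReal_mul' (hnn _ (by positivity))
      _ ≤ ENNReal.ofReal c * (ENNReal.ofReal c ^ k * ENNReal.ofReal (h x)) := by gcongr
      _ = ENNReal.ofReal c ^ (k + 1) * ENNReal.ofReal (h x) := by ring

theorem exists_ofReal_le_mul_of_doubling (hmono : Monotone h) (h0 : h 0 = 0)
    (hdbl : ∀ x > 0, h (2 * x) ≤ c * h x) {δ : ℝ} (hδ : 0 < δ) :
    ∃ C : ℝ≥0∞, C ≠ ∞ ∧ ∀ x > 0, ENNReal.ofReal (h x) ≤ C * ENNReal.ofReal (h (δ * x)) := by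
  obtain ⟨k, hk⟩ := pow_unbounded_of_one_lt δ⁻¹ one_lt_two
  refine ⟨ENNReal.ofReal c ^ k, ENNReal.pow_ne_top ENNReal.ofReal_ne_top, fun x hx => ?_⟩
  calc ENNReal.ofReal (h x) ≤ ENNReal.ofReal (h (2 ^ k * (δ * x))) := by
        refine ENNReal.ofReal_le_ofReal (hmono ?_)
        rw [← mul_assoc]
        exact le_mul_of_one_le_left hx.le ((inv_lt_iff_one_lt_mul₀ hδ).1 hk).le
    _ ≤ _ := ofReal_le_pow_mul_of_doubling (fun y hy => h0 ▸ hmono hy.le) hdbl k (by positivity)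

end Doubling

section MassDistribution

/-- Read `x` as the diameter and `y` as the mass of a set: either the set is null, or its
diameter sits at some scale `ρ (n + 1)` while its mass is controlled at the coarser scale `n`. -/
theorem eq_zero_or_exists_scale {ρ q : ℕ → ℝ≥0∞} (hq : Tendsto q atTop (𝓝 0)) {x y : ℝ≥0∞}
    (hy : ∀ n, x < ρ n → y ≤ q n) (hx : x < ρ 0) :
    y = 0 ∨ ∃ n, ρ (n + 1) ≤ x ∧ y ≤ q n := by
  by_cases hall : ∀ n, x < ρ n
  · exact .inl <| nonpos_iff_eq_zero.1 <| ge_of_tendsto' hq fun n => hy n (hall n)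
  simp only [not_forall, not_lt] at hall
  classical
  obtain ⟨n, hn⟩ : ∃ n, Nat.find hall = n + 1 :=
    Nat.exists_eq_add_one.2 <| Nat.pos_of_ne_zero fun h => (h ▸ Nat.find_spec hall).not_gt hx
  refine .inr ⟨n, hn ▸ Nat.find_spec hall, hy n <| not_le.1 <| Nat.find_min hall ?_⟩
  omega

variable {X : Type*} [EMetricSpace X] [MeasurableSpace X] [BorelSpace X]

theorem pos_mkMetric_of_le_mul {m : ℝ≥0∞ → ℝ≥0∞} {μ : Measure X} {K ε : ℝ≥0∞} (hK : K ≠ ∞)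
    (hε : 0 < ε) (hμ : ∀ t, ediam t ≤ ε → μ t ≤ K * m (ediam t)) {s : Set X} (hs : μ s ≠ 0) :
    0 < Measure.mkMetric m s := by
  have hle : K⁻¹ • μ ≤ Measure.mkMetric m :=
    Measure.le_mkMetric m _ ε hε fun t ht => by
      rw [Measure.smul_apply, smul_eq_mul, ← ENNReal.div_eq_inv_mul]
      exact ENNReal.div_le_of_le_mul' (hμ t ht)
  refine lt_of_lt_of_le ?_ (hle s)
  rw [Measure.smul_apply, smul_eq_mul]
  exact ENNReal.mul_pos (ENNReal.inv_ne_zero.2 hK) hs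

theorem pos_mkMetric_of_measure_le_inv_pow {μ : Measure X} {s : Set X} (hs : μ s ≠ 0)
    {N : ℝ≥0∞} (hN : 1 < N) (hNtop : N ≠ ∞) {r : ℕ → ℝ} (hr : StrictAnti r)
    (hr0 : ∀ n, 0 < r n) {δ : ℝ} (hδ : 0 < δ)
    (hμ : ∀ n t, ediam t < ENNReal.ofReal (δ * r n) → μ t ≤ (N ^ n)⁻¹)
    {h : ℝ → ℝ} (hmono : Monotone h) (h0 : h 0 = 0) {c : ℝ} (hdbl : ∀ x > 0, h (2 * x) ≤ c * h x)
    (hpos : 0 < atTop.liminf fun n => N ^ n * ENNReal.ofReal (h (r n))) :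
    0 < Measure.mkMetric (fun x : ℝ≥0∞ => ENNReal.ofReal (h x.toReal)) s := by
  obtain ⟨ε, hε, hεL⟩ := exists_between hpos
  obtain ⟨n₀, hn₀⟩ := eventually_atTop.1 (eventually_lt_of_lt_liminf hεL)
  obtain ⟨C, hC, hCh⟩ := exists_ofReal_le_mul_of_doubling hmono h0 hdbl hδ
  have hN0 : N ≠ 0 := (zero_lt_one.trans hN).ne'
  have hq : Tendsto (fun n => (N ^ n)⁻¹) atTop (𝓝 0) := by
    simpa only [ENNReal.inv_pow] using
      ENNReal.tendsto_pow_atTop_nhds_zero_of_lt_one (ENNReal.inv_lt_one.2 hN)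
  have hscale : StrictAnti fun n => δ * r n := fun _ _ hmn => mul_lt_mul_of_pos_left (hr hmn) hδ
  refine pos_mkMetric_of_le_mul (K := N * C / ε) (ε := ENNReal.ofReal (δ * r (n₀ + 1)))
    (ENNReal.div_ne_top (ENNReal.mul_ne_top hNtop hC) hε.ne')
    (ENNReal.ofReal_pos.2 (mul_pos hδ (hr0 _))) (fun t ht => ?_) hs
  have hx : ediam t < ENNReal.ofReal (δ * r 0) :=
    ht.trans_lt ((ENNReal.ofReal_lt_ofReal_iff (mul_pos hδ (hr0 0))).2 (hscale n₀.succ_pos))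
  obtain hnull | ⟨m, hm, hμt⟩ := eq_zero_or_exists_scale hq (fun n => hμ n t) hx
  · simp [hnull]
  have hdiam : δ * r (m + 1) ≤ (ediam t).toReal :=
    (ENNReal.ofReal_le_iff_le_toReal (ne_top_of_le_ne_top ENNReal.ofReal_ne_top ht)).1 hm
  have hmn : n₀ ≤ m + 1 := by
    have := hscale.le_iff_ge.1 <|
      (ENNReal.ofReal_le_ofReal_iff (mul_pos hδ (hr0 _)).le).1 (hm.trans ht)
    omega
  have hNpow : (N ^ (m + 1))⁻¹ ≤ ENNReal.ofReal (h (r (m + 1))) / ε := by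
    rw [ENNReal.le_div_iff_mul_le (.inl hε.ne') (.inl hεL.ne_top),
      ENNReal.inv_mul_le_iff (pow_ne_zero _ hN0) (ENNReal.pow_ne_top hNtop)]
    exact (hn₀ _ hmn).le
  calc μ t ≤ (N ^ m)⁻¹ := hμt
    _ = N * (N ^ (m + 1))⁻¹ := by
        rw [pow_succ, ENNReal.mul_inv (.inl (pow_ne_zero _ hN0)) (.inl (ENNReal.pow_ne_top hNtop)),
          mul_left_comm, ENNReal.mul_inv_cancel hN0 hNtop, mul_one]
    _ ≤ N * (C * ENNReal.ofReal (h (δ * r (m + 1))) / ε) := by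
        gcongr
        exact hNpow.trans (by gcongr; exact hCh _ (hr0 _))
    _ ≤ N * (C * ENNReal.ofReal (h (ediam t).toReal) / ε) := by gcongr; exact hmono hdiam
    _ = N * C / ε * ENNReal.ofReal (h (ediam t).toReal) := by
        simp only [div_eq_mul_inv]; ring

end MassDistribution

section Cylinders

theorem infinitePi_uniformOn_cylinder {α : Type*} [MeasurableSpace α] [MeasurableSingletonClass α]
    [Fintype α] [Nonempty α] (σ : ℕ → α) (n : ℕ) :
    Measure.infinitePi (fun _ : ℕ => ProbabilityTheory.uniformOn (Set.univ : Set α))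
      (cylinder σ n) = ((Fintype.card α : ℝ≥0∞) ^ n)⁻¹ := by
  rw [cylinder_eq_pi, Measure.infinitePi_pi _ fun i _ => measurableSet_singleton _]
  simp [ProbabilityTheory.uniformOn_univ, ENNReal.inv_pow]

theorem mem_cylinder_of_dist_lt {α E : Type*} [PseudoMetricSpace E] {F : (ℕ → α) → E}
    {ρ : ℕ → ℝ} (hρ : Antitone ρ)
    (hsep : ∀ σ σ', σ ≠ σ' → ρ (firstDiff σ σ' + 1) ≤ dist (F σ) (F σ'))
    {σ σ' : ℕ → α} {n : ℕ} (h : dist (F σ) (F σ') < ρ n) : σ' ∈ cylinder σ n := by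
  rcases eq_or_ne σ' σ with rfl | hne
  · exact self_mem_cylinder σ' n
  rw [mem_cylinder_iff_le_firstDiff hne]
  by_contra! hlt
  have := hsep σ' σ hne
  rw [dist_comm] at this
  linarith [hρ (Nat.succ_le_of_lt hlt)]

theorem map_apply_le_of_ediam_lt {X E : Type*} [MeasurableSpace X] [PseudoMetricSpace E]
    [MeasurableSpace E] [OpensMeasurableSpace E] {F : X → E} (hF : Measurable F) (ν : Measure X)
    {S : X → Set X} {r : ℝ} {b : ℝ≥0∞} (hS : ∀ x y, dist (F x) (F y) < r → y ∈ S x)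
    (hν : ∀ x, ν (S x) ≤ b) {t : Set E} (ht : ediam t < ENNReal.ofReal r) :
    ν.map F t ≤ b := by
  calc ν.map F t ≤ ν.map F (closure t) := measure_mono subset_closure
    _ = ν (F ⁻¹' closure t) := Measure.map_apply hF isClosed_closure.measurableSet
    _ ≤ b := by
      rcases (F ⁻¹' closure t).eq_empty_or_nonempty with hempty | ⟨x, hx⟩
      · simp [hempty]
      refine (measure_mono fun y hy => hS x y ?_).trans (hν x)
      rw [← edist_lt_ofReal]
      calc edist (F x) (F y) ≤ ediam (closure t) := edist_le_ediam_of_mem hx hy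
        _ < ENNReal.ofReal r := by rwa [ediam_closure]

end Cylinders

section CodingMap

variable {α E : Type*} [NormedAddCommGroup E] [NormedSpace ℝ E] [CompleteSpace E]
  {s : ℕ → ℝ} {d : ℕ → α → E} {κ τ M : ℝ}

noncomputable def codingMap (s : ℕ → ℝ) (d : ℕ → α → E) (σ : ℕ → α) : E :=
  ∑' i, s i • d i (σ i)

theorem continuous_codingMap [TopologicalSpace α] [DiscreteTopology α] (hs : ∀ n, 0 ≤ s n)
    (hsum : Summable s) (hd : ∀ n a, ‖d n a‖ ≤ κ) : Continuous (codingMap s d) :=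
  continuous_tsum
    (fun i => (continuous_of_discreteTopology.comp (continuous_apply i)).const_smul _)
    (hsum.mul_right κ) fun n σ => norm_smul_le_mul_of_norm_le hs (fun n => hd n (σ n)) n

theorem sub_le_norm_codingMap_sub (hs : ∀ n, 0 ≤ s n) (hsum : Summable s)
    (hd : ∀ n a, ‖d n a‖ ≤ κ) (hκ : ∀ n a b, ‖d n a - d n b‖ ≤ κ)
    (hτ : ∀ n a b, a ≠ b → τ ≤ ‖d n a - d n b‖) {σ σ' : ℕ → α} (hne : σ ≠ σ') :
    τ * s (firstDiff σ σ') - κ * ∑' i, s (firstDiff σ σ' + 1 + i) ≤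
      ‖codingMap s d σ - codingMap s d σ'‖ := by
  set m := firstDiff σ σ'
  set g : ℕ → E := fun i => s i • (d i (σ i) - d i (σ' i))
  have hg : Summable g := summable_smul_of_norm_le hs hsum fun n => hκ n _ _
  have hsplit : codingMap s d σ - codingMap s d σ' = g m + ∑' i, g (m + 1 + i) := by
    have hhead : ∑ i ∈ Finset.range m, g i = 0 :=
      Finset.sum_eq_zero fun i hi => by
        simp [g, apply_eq_of_lt_firstDiff (Finset.mem_range.1 hi)]
    rw [codingMap, codingMap, ← (summable_smul_of_norm_le hs hsum fun n => hd n _).tsum_sub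
      (summable_smul_of_norm_le hs hsum fun n => hd n _)]
    simp_rw [← smul_sub]
    rw [← hg.sum_add_tsum_nat_add m, hhead, zero_add]
    simp_rw [add_comm _ m]
    exact tsum_nat_add_left_eq_add hg m
  have hgap : τ * s m ≤ ‖g m‖ := by
    rw [norm_smul, Real.norm_of_nonneg (hs m), mul_comm]
    exact mul_le_mul_of_nonneg_left (hτ m _ _ (apply_firstDiff_ne hne)) (hs m)
  have htail : ‖∑' i, g (m + 1 + i)‖ ≤ κ * ∑' i, s (m + 1 + i) :=
    norm_tsum_smul_le (fun i => hs _) (summable_nat_add_left hsum _) fun i => hκ _ _ _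
  have hrev := norm_sub_norm_le (g m) (-∑' i, g (m + 1 + i))
  rw [norm_neg, sub_neg_eq_add] at hrev
  rw [hsplit]
  linarith

theorem mul_tail_le_dist_codingMap (hs : ∀ n, 0 ≤ s n) (hsum : Summable s)
    (hd : ∀ n a, ‖d n a‖ ≤ κ) (hκ : ∀ n a b, ‖d n a - d n b‖ ≤ κ)
    (hτ : ∀ n a b, a ≠ b → τ ≤ ‖d n a - d n b‖) (hM : 0 < M)
    (hsep : ∀ n, κ * ∑' i, s (n + 1 + i) ≤ M * (τ * s n)) {σ σ' : ℕ → α} (hne : σ ≠ σ') :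
    (1 - M) / M * (κ * ∑' i, s (firstDiff σ σ' + 1 + i)) ≤
      dist (codingMap s d σ) (codingMap s d σ') := by
  rw [dist_eq_norm]
  refine le_trans ?_ (sub_le_norm_codingMap_sub hs hsum hd hκ hτ hne)
  rw [div_mul_eq_mul_div, div_le_iff₀ hM]
  linarith [hsep (firstDiff σ σ')]

variable [MeasurableSpace E] [BorelSpace E] [Fintype α] [Nonempty α] [MeasurableSpace α]
  [DiscreteMeasurableSpace α] [TopologicalSpace α] [DiscreteTopology α]

theorem map_codingMap_apply_le (hs : ∀ n, 0 < s n) (hsum : Summable s)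
    (hd : ∀ n a, ‖d n a‖ ≤ κ) (hκ : ∀ n a b, ‖d n a - d n b‖ ≤ κ)
    (hτ : ∀ n a b, a ≠ b → τ ≤ ‖d n a - d n b‖) (hM : 0 < M) (hM1 : M < 1)
    (hsep : ∀ n, κ * ∑' i, s (n + 1 + i) ≤ M * (τ * s n)) (n : ℕ) {t : Set E}
    (ht : ediam t < ENNReal.ofReal ((1 - M) / M * (κ * ∑' i, s (n + i)))) :
    (Measure.infinitePi fun _ : ℕ => ProbabilityTheory.uniformOn (Set.univ : Set α)).map
      (codingMap s d) t ≤ ((Fintype.card α : ℝ≥0∞) ^ n)⁻¹ := by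
  have hs0 (n : ℕ) : 0 ≤ s n := (hs n).le
  have hanti : Antitone fun n => (1 - M) / M * (κ * ∑' i, s (n + i)) := fun _ _ hmn =>
    mul_le_mul_of_nonneg_left
      (mul_le_mul_of_nonneg_left ((strictAnti_tsum_tail hs hsum).antitone hmn)
        ((norm_nonneg _).trans (hd 0 (Classical.arbitrary α))))
      (div_nonneg (by linarith) hM.le)
  exact map_apply_le_of_ediam_lt (continuous_codingMap hs0 hsum hd).measurable _
    (fun σ σ' h => mem_cylinder_of_dist_lt hanti
      (fun σ σ' hne => mul_tail_le_dist_codingMap hs0 hsum hd hκ hτ hM hsep hne) h)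
    (fun σ => (infinitePi_uniformOn_cylinder σ n).le) ht

end CodingMap

/-- If `h` is a doubling dimension function with `liminf_n N^n h(κRₙ) > 0`,
then `ℋ^h(C_{s,𝒟}) > 0`.  Here `Rₙ = ∑_{i ≥ n} sᵢ` is the tail of the series after the
first `n` terms, and the separation condition `sup_n κRₙ₊₁/(τ sₙ) ≤ M < 1` holds. -/
theorem stmt_7 (p N : ℕ) (hN : 2 ≤ N)
    (s : ℕ → ℝ) (hs : ∀ n, 0 < s n) (hsum : Summable s)
    (d : ℕ → Fin N → EuclideanSpace ℝ (Fin p))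
    (hzero : ∀ n, d n ⟨0, by omega⟩ = 0)
    (κ τ : ℝ) (hτ : 0 < τ)
    (hκ : ∀ (n : ℕ) (i j : Fin N), i ≠ j → ‖d n i - d n j‖ ≤ κ)
    (hτd : ∀ (n : ℕ) (i j : Fin N), i ≠ j → τ ≤ ‖d n i - d n j‖)
    (R : ℕ → ℝ) (hR : ∀ n, R n = ∑' i, s (n + i))
    (M : ℝ) (hM : M < 1) (hsep : ∀ n, κ * R (n + 1) ≤ M * (τ * s n))
    (h : ℝ → ℝ) (hmono : Monotone h) (h0 : h 0 = 0)
    (c : ℝ) (hdbl : ∀ x > 0, h (2 * x) ≤ c * h x)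
    (hpos : 0 < Filter.atTop.liminf
      (fun n => (N : ℝ≥0∞) ^ n * ENNReal.ofReal (h (κ * R n)))) :
    0 < Measure.mkMetric (fun r : ℝ≥0∞ => ENNReal.ofReal (h r.toReal))
        (Set.range fun σ : ℕ → Fin N => ∑' i, s i • d i (σ i)) := by
  obtain rfl : R = fun n => ∑' i, s (n + i) := funext hR
  have : NeZero N := ⟨by omega⟩
  have h01 : (⟨0, by omega⟩ : Fin N) ≠ ⟨1, by omega⟩ := by simp
  have hκ0 : 0 < κ := hτ.trans_le ((hτd 0 _ _ h01).trans (hκ 0 _ _ h01))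
  have hκ_all (n : ℕ) (a b : Fin N) : ‖d n a - d n b‖ ≤ κ := by
    rcases eq_or_ne a b with rfl | hab
    · simpa using hκ0.le
    · exact hκ n a b hab
  have hd (n : ℕ) (a : Fin N) : ‖d n a‖ ≤ κ := by
    simpa only [hzero, sub_zero] using hκ_all n a ⟨0, by omega⟩
  have hM0 : 0 < M := pos_of_mul_pos_left ((mul_pos hκ0 (tsum_tail_pos hs hsum 1)).trans_le
    (hsep 0)) (mul_pos hτ (hs 0)).le
  have hrange : (Measure.infinitePi fun _ : ℕ => ProbabilityTheory.uniformOn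
      (Set.univ : Set (Fin N))).map (codingMap s d) (Set.range (codingMap s d)) ≠ 0 :=
    ne_bot_of_le_ne_bot (by simp) (Measure.le_map_apply
      (continuous_codingMap (fun n => (hs n).le) hsum hd).measurable.aemeasurable _)
  refine pos_mkMetric_of_measure_le_inv_pow hrange (N := N) (by exact_mod_cast hN)
    (ENNReal.natCast_ne_top N) ((strictAnti_tsum_tail hs hsum).const_mul hκ0)
    (fun n => mul_pos hκ0 (tsum_tail_pos hs hsum n)) (δ := (1 - M) / M)
    (div_pos (by linarith) hM0) (fun n t ht => ?_) hmono h0 hdbl hpos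
  simpa using map_codingMap_apply_le hs hsum hd hκ_all hτd hM0 hM hsep n ht
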